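/- arXiv:math/0311319 — 3 statements merged into one kernel-verified Lean document; each statement's English description precedes it below -/
import Mathlib

section
/- An ideal P of R_a is prime if and only if there exists a basic irreducible divisor h of X^n − 1 over ZMod p^a such that P is the ideal of R_a generated by h̄ and by the image of the constant polynomial p. Moreover, every prime ideal of R_a is maximal. -/
/-!
Reduction modulo `p` maps `(ZMod p^a)[X]` onto `(ZMod p)[X]` with the nilpotent kernel `(p)`.
Every prime of `R_a` therefore contains `p`, so it is the image of the preimage of `(g₀)` for
a monic irreducible factor `g₀` of `X^n - 1` over `ZMod p`, and such ideals are maximal.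
Since `p ∤ n`, `X^n - 1` is separable over `ZMod p`, so `g₀` is coprime to its cofactor and
Hensel lifting along the nilpotent ideal `(p)` produces a monic divisor `h` of `X^n - 1` over
`ZMod p^a` reducing to `g₀`: a basic irreducible divisor.
-/

open Polynomial

/-- The quotient ring `(ZMod p^a)[X]/(X^n - 1)`. -/
abbrev Rquot (p a n : ℕ) :=
  Polynomial (ZMod (p ^ a)) ⧸ Ideal.span {(X : Polynomial (ZMod (p ^ a))) ^ n - 1}

/-- The natural quotient map `(ZMod p^a)[X] → (ZMod p^a)[X]/(X^n - 1)`. -/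
noncomputable abbrev rmk (p a n : ℕ) : Polynomial (ZMod (p ^ a)) →+* Rquot p a n :=
  Ideal.Quotient.mk _

/-- A basic irreducible divisor of `X^n - 1` over `ZMod p^a`: a monic divisor of `X^n - 1`
whose coefficientwise reduction modulo `p` is irreducible. -/
def BasicIrr (p a n : ℕ) [Fact p.Prime] (ha : a ≠ 0) (h : Polynomial (ZMod (p ^ a))) : Prop :=
  h.Monic ∧ h ∣ (X ^ n - 1) ∧
    Irreducible (h.map (ZMod.castHom (dvd_pow_self p ha) (ZMod p)))

namespace Polynomial

section Hensel

variable {A : Type*} [CommRing A] {ε : A} {f g h u v : A[X]}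

theorem exists_monic_factor_mod_pow_step {k : ℕ} (hg : g.Monic)
    (huv : C ε ∣ u * g + v * h - 1) (hfgh : C ε ^ (k + 1) ∣ f - g * h) :
    ∃ g' h' : A[X], g'.Monic ∧ C ε ∣ g' - g ∧ C ε ∣ h' - h ∧ C ε ^ (k + 2) ∣ f - g' * h' := by
  obtain ⟨c, hc⟩ := hfgh
  -- Reducing `v * c` modulo the monic `g` keeps `g + ε ^ (k + 1) * β` monic, and the new error
  -- is `ε ^ (k + 1) * c * (1 - u * g - v * h)` up to a multiple of `ε ^ (2 * k + 2)`.
  set β := (v * c) %ₘ g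
  set γ := u * c + (v * c) /ₘ g * h
  have hβ : β = v * c - g * ((v * c) /ₘ g) := eq_sub_of_add_eq (modByMonic_add_div _ g)
  have hε : C ε ∣ C ε ^ (k + 1) := dvd_pow_self _ k.succ_ne_zero
  refine ⟨g + C ε ^ (k + 1) * β, h + C ε ^ (k + 1) * γ, ?_, ?_, ?_, ?_⟩
  · rcases subsingleton_or_nontrivial A with _ | _
    · exact monic_of_subsingleton _
    refine hg.add_of_left ?_
    rw [← C_pow, ← smul_eq_C_mul]
    exact (degree_smul_le _ _).trans_lt (degree_modByMonic_lt _ hg)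
  · rw [add_sub_cancel_left]
    exact dvd_mul_of_dvd_left hε _
  · rw [add_sub_cancel_left]
    exact dvd_mul_of_dvd_left hε _
  · have hfgh' : f - (g + C ε ^ (k + 1) * β) * (h + C ε ^ (k + 1) * γ) =
        -(C ε ^ (k + 1) * (c * (u * g + v * h - 1) + C ε ^ (k + 1) * (β * γ))) := by
      rw [hβ]
      linear_combination hc
    rw [hfgh', dvd_neg, pow_succ]
    exact mul_dvd_mul_left _ (dvd_add (huv.mul_left c) (dvd_mul_of_dvd_left hε _))

theorem exists_monic_factor_mod_pow (hg : g.Monic) (huv : C ε ∣ u * g + v * h - 1)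
    (hfgh : C ε ∣ f - g * h) (k : ℕ) :
    ∃ g' h' : A[X], g'.Monic ∧ C ε ∣ g' - g ∧ C ε ∣ h' - h ∧ C ε ^ (k + 1) ∣ f - g' * h' := by
  induction k with
  | zero => exact ⟨g, h, hg, by simp, by simp, by simpa using hfgh⟩
  | succ k ih =>
    obtain ⟨g₁, h₁, hg₁, hgg₁, hhh₁, hfgh₁⟩ := ih
    have huv₁ : C ε ∣ u * g₁ + v * h₁ - 1 := by
      have := (huv.add (hgg₁.mul_left u)).add (hhh₁.mul_left v)
      convert this using 1
      ring
    obtain ⟨g₂, h₂, hg₂, hgg₂, hhh₂, hfgh₂⟩ :=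
      exists_monic_factor_mod_pow_step hg₁ huv₁ hfgh₁
    refine ⟨g₂, h₂, hg₂, ?_, ?_, hfgh₂⟩
    · simpa using hgg₂.add hgg₁
    · simpa using hhh₂.add hhh₁

theorem exists_monic_dvd_of_isNilpotent (hε : IsNilpotent ε) (hg : g.Monic)
    (huv : C ε ∣ u * g + v * h - 1) (hfgh : C ε ∣ f - g * h) :
    ∃ g' : A[X], g'.Monic ∧ C ε ∣ g' - g ∧ g' ∣ f := by
  obtain ⟨k, hk⟩ := hε
  obtain ⟨g', h', hg', hgg', -, hfgh'⟩ := exists_monic_factor_mod_pow hg huv hfgh k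
  rw [← C_pow, pow_succ, hk, zero_mul, C_0, zero_dvd_iff, sub_eq_zero] at hfgh'
  exact ⟨g', hg', hgg', h', hfgh'⟩

end Hensel

end Polynomial

theorem ZMod.ker_castHom {m n : ℕ} (hmn : m ∣ n) :
    RingHom.ker (ZMod.castHom hmn (ZMod m)) = Ideal.span {(m : ZMod n)} := by
  refine le_antisymm (fun x hx => ?_) ?_
  · obtain ⟨z, rfl⟩ := ZMod.intCast_surjective x
    rw [RingHom.mem_ker, map_intCast, ZMod.intCast_zmod_eq_zero_iff_dvd] at hx
    obtain ⟨w, rfl⟩ := hx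
    rw [Int.cast_mul, Int.cast_natCast]
    exact Ideal.mul_mem_right _ _ (Ideal.subset_span rfl)
  · rw [Ideal.span_le, Set.singleton_subset_iff, SetLike.mem_coe, RingHom.mem_ker, map_natCast,
      ZMod.natCast_self]

theorem Polynomial.ker_mapRingHom_castHom {m n : ℕ} (hmn : m ∣ n) :
    RingHom.ker (mapRingHom (ZMod.castHom hmn (ZMod m))) = Ideal.span {C (m : ZMod n)} := by
  rw [ker_mapRingHom, ZMod.ker_castHom, Ideal.map_span, Set.image_singleton]

theorem Polynomial.comap_mapRingHom_castHom_span_singleton {m n : ℕ} (hmn : m ∣ n)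
    (h : (ZMod n)[X]) :
    (Ideal.span {h.map (ZMod.castHom hmn (ZMod m))}).comap
        (mapRingHom (ZMod.castHom hmn (ZMod m))) =
      Ideal.span {h, C (m : ZMod n)} := by
  have hsurj := map_surjective _ (ZMod.castHom_surjective hmn)
  rw [← coe_mapRingHom, ← Set.image_singleton, ← Ideal.map_span,
    Ideal.comap_map_of_surjective' _ hsurj, ker_mapRingHom_castHom, ← Ideal.span_insert]

theorem Polynomial.map_castHom_eq_zero_iff {m n : ℕ} (hmn : m ∣ n) (q : (ZMod n)[X]) :
    q.map (ZMod.castHom hmn (ZMod m)) = 0 ↔ C (m : ZMod n) ∣ q := by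
  rw [← Ideal.mem_span_singleton, ← ker_mapRingHom_castHom hmn, RingHom.mem_ker, coe_mapRingHom]

section Reduction

variable {p a n : ℕ} [Fact p.Prime] (ha : a ≠ 0)

local notation "φ" => ZMod.castHom (dvd_pow_self p ha) (ZMod p)

theorem isMaximal_span_C_of_irreducible_map {h : (ZMod (p ^ a))[X]}
    (hirr : Irreducible (h.map φ)) : (Ideal.span {h, C (p : ZMod (p ^ a))}).IsMaximal := by
  rw [← comap_mapRingHom_castHom_span_singleton]
  have := PrincipalIdealRing.isMaximal_of_irreducible hirr
  exact Ideal.comap_isMaximal_of_surjective _ (map_surjective _ (ZMod.castHom_surjective _))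

theorem BasicIrr.isMaximal_span {h : (ZMod (p ^ a))[X]} (hb : BasicIrr p a n ha h) :
    (Ideal.span {rmk p a n h, rmk p a n (C (p : ZMod (p ^ a)))}).IsMaximal := by
  rw [← Set.image_pair, ← Ideal.map_span]
  have := isMaximal_span_C_of_irreducible_map ha hb.2.2
  refine Ideal.IsMaximal.map_of_surjective_of_ker_le Ideal.Quotient.mk_surjective ?_
  obtain ⟨w, hw⟩ := hb.2.1
  rw [Ideal.mk_ker, Ideal.span_singleton_le_iff_mem, hw]
  exact Ideal.mul_mem_right _ _ (Ideal.subset_span (Set.mem_insert _ _))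

theorem exists_basicIrr_map_eq (hpn : ¬ p ∣ n) {g₀ : (ZMod p)[X]} (hm : g₀.Monic)
    (hirr : Irreducible g₀) (hdvd : g₀ ∣ X ^ n - 1) :
    ∃ h, BasicIrr p a n ha h ∧ h.map φ = g₀ := by
  have hsurj : Function.Surjective (map φ) := map_surjective _ (ZMod.castHom_surjective _)
  obtain ⟨h₀, hh₀⟩ := hdvd
  have hsep : (g₀ * h₀).Separable := by
    rw [← hh₀]
    simpa using separable_X_pow_sub_C' p n (1 : ZMod p) hpn one_ne_zero
  obtain ⟨u, v, huv⟩ := hsep.isCoprime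
  obtain ⟨G, hG, -, hGm⟩ := lifts_and_degree_eq_and_monic ((mem_lifts _).mpr (hsurj g₀)) hm
  obtain ⟨H, rfl⟩ := hsurj h₀
  obtain ⟨U, rfl⟩ := hsurj u
  obtain ⟨V, rfl⟩ := hsurj v
  have hp : IsNilpotent (p : ZMod (p ^ a)) := ⟨a, by rw [← Nat.cast_pow, ZMod.natCast_self]⟩
  obtain ⟨h, hmon, hhG, hdvd⟩ := exists_monic_dvd_of_isNilpotent (f := X ^ n - 1) (h := H)
    (u := U) (v := V) hp hGm
    ((map_castHom_eq_zero_iff (dvd_pow_self p ha) _).mp (by simp [hG, huv]))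
    ((map_castHom_eq_zero_iff (dvd_pow_self p ha) _).mp (by simp [hG, hh₀]))
  have hh : h.map φ = g₀ := by
    rw [← hG, ← sub_eq_zero, ← Polynomial.map_sub, map_castHom_eq_zero_iff]
    exact hhG
  exact ⟨h, ⟨hmon, hdvd, hh ▸ hirr⟩, hh⟩

theorem exists_basicIrr_of_isPrime (hpn : ¬ p ∣ n) {Q : Ideal (ZMod (p ^ a))[X]} [hQ : Q.IsPrime]
    (hXn : X ^ n - 1 ∈ Q) : ∃ h, BasicIrr p a n ha h ∧ Q = Ideal.span {h, C (p : ZMod (p ^ a))} := by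
  have hsurj : Function.Surjective (mapRingHom φ) :=
    map_surjective _ (ZMod.castHom_surjective _)
  have hkerQ : RingHom.ker (mapRingHom φ) ≤ Q := by
    rw [ker_mapRingHom_castHom, Ideal.span_singleton_le_iff_mem]
    refine hQ.mem_of_pow_mem a ?_
    rw [← C_pow, ← Nat.cast_pow, ZMod.natCast_self, C_0]
    exact Q.zero_mem
  have hQ' : (Q.map (mapRingHom φ)).IsPrime := Ideal.map_isPrime_of_surjective hsurj hkerQ
  have hXn' : (X ^ n - 1 : (ZMod p)[X]) ∈ Q.map (mapRingHom φ) := by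
    simpa using Ideal.mem_map_of_mem (mapRingHom φ) hXn
  have hne : Q.map (mapRingHom φ) ≠ ⊥ := by
    intro hbot
    rw [hbot, Ideal.mem_bot, ← C_1] at hXn'
    exact X_pow_sub_C_ne_zero (Nat.pos_of_ne_zero (by rintro rfl; exact hpn (dvd_zero p))) _ hXn'
  obtain ⟨g₀, hm, hspan⟩ := exists_monic_span _ hne
  have hprime : Prime g₀ := (Ideal.span_singleton_prime hm.ne_zero).mp (hspan ▸ hQ')
  obtain ⟨h, hb, hh⟩ := exists_basicIrr_map_eq ha hpn hm hprime.irreducible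
    (Ideal.mem_span_singleton.mp (hspan ▸ hXn'))
  refine ⟨h, hb, ?_⟩
  rw [← comap_mapRingHom_castHom_span_singleton (dvd_pow_self p ha), hh, ← hspan,
    Ideal.comap_map_of_surjective' _ hsurj, sup_eq_left.mpr hkerQ]

theorem Rquot.exists_basicIrr_of_isPrime (hpn : ¬ p ∣ n) (P : Ideal (Rquot p a n)) [P.IsPrime] :
    ∃ h, BasicIrr p a n ha h ∧ P = Ideal.span {rmk p a n h, rmk p a n (C (p : ZMod (p ^ a)))} := by
  have hXn : rmk p a n (X ^ n - 1) = 0 :=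
    Ideal.Quotient.eq_zero_iff_mem.mpr (Ideal.mem_span_singleton_self _)
  obtain ⟨h, hb, hQ⟩ := _root_.exists_basicIrr_of_isPrime ha hpn (Q := P.comap (rmk p a n))
    (by rw [Ideal.mem_comap, hXn]; exact P.zero_mem)
  refine ⟨h, hb, ?_⟩
  rw [← Ideal.map_comap_of_surjective _ Ideal.Quotient.mk_surjective P, hQ, Ideal.map_span,
    Set.image_pair]

end Reduction

theorem stmt2_general (p : ℕ) [Fact p.Prime] (a n : ℕ) (ha : 0 < a) (hpn : ¬ p ∣ n)
    (P : Ideal (Rquot p a n)) :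
    (P.IsPrime ↔ ∃ h : Polynomial (ZMod (p ^ a)), BasicIrr p a n ha.ne' h ∧
        P = Ideal.span {rmk p a n h, rmk p a n (C (p : ZMod (p ^ a)))}) ∧
    (P.IsPrime → P.IsMaximal) := by
  refine ⟨⟨fun _ => Rquot.exists_basicIrr_of_isPrime ha.ne' hpn P, ?_⟩, fun _ => ?_⟩
  · rintro ⟨h, hb, rfl⟩
    exact (hb.isMaximal_span ha.ne').isPrime
  · obtain ⟨h, hb, rfl⟩ := Rquot.exists_basicIrr_of_isPrime ha.ne' hpn P
    exact hb.isMaximal_span ha.ne'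

theorem stmt2 (p : ℕ) [Fact p.Prime] (a n : ℕ) (ha : 0 < a) (hn : 0 < n) (hpn : ¬ p ∣ n)
    (P : Ideal (Rquot p a n)) :
    (P.IsPrime ↔ ∃ h : Polynomial (ZMod (p ^ a)), BasicIrr p a n ha.ne' h ∧
        P = Ideal.span {rmk p a n h, rmk p a n (C (p : ZMod (p ^ a)))}) ∧
    (P.IsPrime → P.IsMaximal) :=
  stmt2_general p a n ha hpn P
end

section
/- For every ideal I of R_∞ there exist an integer b ≥ 0, integers 0 ≤ m₀ < m₁ < ⋯ < m_{b−1}, and polynomials f₀, …, f_{b−1} ∈ ℤ_p[X], each monic and dividing X^n − 1, satisfying the divisibility chain f_{b−1} | f_{b−2} | ⋯ | f₁ | f₀, such that I is the ideal of R_∞ generated by the images of p^{m₀}·f₀, p^{m₁}·f₁, …, p^{m_{b−1}}·f_{b−1} (with b = 0, the empty set of generators, giving the zero ideal). -/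
/-!
Since `p ∤ n`, `F = X^n - 1` is separable modulo `p`. Hensel's lemma lifts every monic factor
of `F mod p` to a monic factor of `F`, and a Bezout relation modulo `p` becomes a unit in any
finite `ℤ_p`-algebra; together these show that a factor `g ∣ F` lies in an ideal `J ∋ F` of
`ℤ_p[X]` as soon as its reduction lies in the reduction of `J`.

Let `J` be the preimage of `I` and `J_m = {f | p^m f ∈ J}`. The reduction of `J_m` is generated
by a monic `ḡ_m ∣ F mod p`; its Hensel lift `g_m` lies in `J_m`, and the `g_m` form a divisibility
chain because the `J_m` increase. The `J_m` stabilise at some `M`, and then `J_M = (g_M)`: a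
remainder modulo `g_M` in `J_M` reduces to `0`, so it is `p` times an element of `J_{M+1} = J_M`
of no larger degree, hence divisible by every power of `p`. Descending from `M`, writing
`f = g_m c + p f'` with `f' ∈ J_{m+1}` for `f ∈ J_m` shows `J = (p^m g_m : m ≤ M)`.
-/

open Polynomial

/-- The quotient ring `ℤ_p[X]/(X^n - 1)`. -/
abbrev RquotP (p n : ℕ) [Fact p.Prime] :=
  Polynomial ℤ_[p] ⧸ Ideal.span {(X : Polynomial ℤ_[p]) ^ n - 1}

/-- The natural quotient map `ℤ_p[X] → ℤ_p[X]/(X^n - 1)`. -/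
noncomputable abbrev pmk (p n : ℕ) [Fact p.Prime] : Polynomial ℤ_[p] →+* RquotP p n :=
  Ideal.Quotient.mk _

open IsLocalRing

theorem IsLocalRing.map_maximalIdeal_le_jacobson_bot {R B : Type*} [CommRing R] [IsLocalRing R]
    [CommRing B] [Algebra R B] [Algebra.IsIntegral R B] :
    (maximalIdeal R).map (algebraMap R B) ≤ Ideal.jacobson ⊥ := by
  refine Ideal.map_le_iff_le_comap.2 fun r hr => Ideal.mem_sInf.2 ?_
  rintro m ⟨-, hm⟩
  have := Ideal.isMaximal_comap_of_isIntegral_of_isMaximal (R := R) m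
  rw [← Ideal.mem_comap, IsLocalRing.eq_maximalIdeal this]
  exact hr

theorem Polynomial.exists_monic_span_eq {K : Type*} [Field K] {J : Ideal K[X]} (hJ : J ≠ ⊥) :
    ∃ g : K[X], g.Monic ∧ J = Ideal.span {g} := by
  classical
  set g := Submodule.IsPrincipal.generator J
  have hg : g ≠ 0 := by rwa [Ne, ← Submodule.IsPrincipal.eq_bot_iff_generator_eq_zero]
  refine ⟨normalize g, monic_normalize hg, ?_⟩
  rw [Ideal.span_singleton_eq_span_singleton.2 (normalize_associated g),
    Ideal.span_singleton_generator]

theorem Polynomial.exists_mul_add_mul_sub_one_mem_ker {R S : Type*} [CommRing R] [CommRing S]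
    {φ : R →+* S} (hφ : Function.Surjective φ) {g h : R[X]}
    (hgh : IsCoprime (g.map φ) (h.map φ)) :
    ∃ a b : R[X], a * g + b * h - 1 ∈ RingHom.ker (mapRingHom φ) := by
  obtain ⟨a', b', hab⟩ := hgh
  obtain ⟨a, rfl⟩ := map_surjective φ hφ a'
  obtain ⟨b, rfl⟩ := map_surjective φ hφ b'
  exact ⟨a, b, by simp [RingHom.mem_ker, ← hab]⟩

theorem Polynomial.C_dvd_modByMonic_mul_add_modByMonic_mul_sub {R : Type*} [CommRing R]
    [Nontrivial R] {π : R} {G H a b c E : R[X]} (hG : G.Monic) (hH : H.Monic)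
    (hbez : a * G + b * H = 1 + C π * c) (hE : E.degree < (G * H).degree) :
    C π ∣ (E * b %ₘ G) * H + (E * a %ₘ H) * G - E := by
  have hrdeg : ((E * b %ₘ G) * H).degree < (G * H).degree := by
    rw [hH.degree_mul, hH.degree_mul]
    exact WithBot.add_lt_add_right (degree_ne_bot.2 hH.ne_zero) (degree_modByMonic_lt _ hG)
  have hsdeg : ((E * a %ₘ H) * G).degree < (G * H).degree := by
    rw [hG.degree_mul, mul_comm G H, hG.degree_mul]
    exact WithBot.add_lt_add_right (degree_ne_bot.2 hG.ne_zero) (degree_modByMonic_lt _ hH)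
  -- the left side is the remainder of `π c E` modulo `G H`
  have hrem := (div_modByMonic_unique (f := C π * (c * E)) (E * b /ₘ G + E * a /ₘ H) _
    (hG.mul hH) ⟨?_, (degree_sub_le _ _).trans_lt
      (max_lt ((degree_add_le _ _).trans_lt (max_lt hrdeg hsdeg)) hE)⟩).2
  · rw [← hrem, ← smul_eq_C_mul, smul_modByMonic, smul_eq_C_mul]
    exact dvd_mul_right _ _
  · linear_combination H * modByMonic_add_div (E * b) G + G * modByMonic_add_div (E * a) H
      + E * hbez

section LocalRing

variable {R S : Type*} [CommRing R] [IsLocalRing R] [CommRing S] [Nontrivial S] {φ : R →+* S}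

theorem AdjoinRoot.isUnit_mk_of_sub_one_mem_ker {F u : R[X]} (hF : F.Monic)
    (hu : u - 1 ∈ RingHom.ker (mapRingHom φ)) : IsUnit (AdjoinRoot.mk F u) := by
  have := hF.finite_adjoinRoot
  have hker : RingHom.ker φ ≤ maximalIdeal R := le_maximalIdeal (RingHom.ker_ne_top φ)
  refine Ideal.isUnit_of_sub_one_mem_jacobson_bot _
    (IsLocalRing.map_maximalIdeal_le_jacobson_bot (B := AdjoinRoot F) (Ideal.map_mono hker ?_))
  have := Ideal.mem_map_of_mem (AdjoinRoot.mk F) hu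
  rwa [ker_mapRingHom, Ideal.map_map, map_sub, map_one] at this

namespace Polynomial

theorem mem_of_dvd_of_map_mem_map (hφ : Function.Surjective φ) {F g : R[X]} {J : Ideal R[X]}
    (hF : F.Monic) (hsep : (F.map φ).Separable) (hFJ : F ∈ J) (hgF : g ∣ F)
    (hg : g.map φ ∈ J.map (mapRingHom φ)) : g ∈ J := by
  obtain ⟨h, rfl⟩ := hgF
  obtain ⟨a, b, hab⟩ := exists_mul_add_mul_sub_one_mem_ker hφ
    (Separable.isCoprime (by rwa [← Polynomial.map_mul]))
  obtain ⟨f, hfJ, hfmap⟩ := (Ideal.mem_map_iff_of_surjective _ (map_surjective φ hφ)).1 hg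
  have hfg : f - g ∈ RingHom.ker (mapRingHom φ) := by
    simpa [RingHom.mem_ker, sub_eq_zero] using hfmap
  -- `g u ∈ J` for a `u ≡ 1` modulo the kernel, and such a `u` is invertible modulo `F`
  set u := a * f + b * h
  have hu : u - 1 ∈ RingHom.ker (mapRingHom φ) := by
    convert Ideal.add_mem _ hab (Ideal.mul_mem_left _ a hfg) using 1; ring
  have hguJ : g * u ∈ J := by
    convert J.add_mem (J.mul_mem_left (a * g) hfJ) (J.mul_mem_left b hFJ) using 1; ring
  obtain ⟨v', hv⟩ := (AdjoinRoot.isUnit_mk_of_sub_one_mem_ker hF hu).exists_right_inv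
  obtain ⟨v, rfl⟩ := AdjoinRoot.mk_surjective v'
  obtain ⟨w, hw⟩ : g * h ∣ u * v - 1 :=
    AdjoinRoot.mk_eq_zero.1 (by rw [map_sub, map_mul, hv, map_one, sub_self])
  convert J.sub_mem (J.mul_mem_right v hguJ) (J.mul_mem_right w (J.mul_mem_left g hFJ)) using 1
  linear_combination -g * hw

theorem dvd_of_map_dvd_map (hφ : Function.Surjective φ) {F u v : R[X]} (hF : F.Monic)
    (hsep : (F.map φ).Separable) (hu : u ∣ F) (hv : v ∣ F) (h : u.map φ ∣ v.map φ) : u ∣ v := by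
  rw [← Ideal.mem_span_singleton] at hu h ⊢
  refine mem_of_dvd_of_map_mem_map hφ hF hsep hu hv ?_
  rwa [Ideal.map_span, Set.image_singleton, coe_mapRingHom]

end Polynomial

end LocalRing

namespace PadicInt

variable {p : ℕ} [Fact p.Prime]

theorem mem_maximalIdeal_pow_smul_top_iff {k : ℕ} {x : ℤ_[p]} :
    x ∈ maximalIdeal ℤ_[p] ^ k • (⊤ : Submodule ℤ_[p] ℤ_[p]) ↔ (p : ℤ_[p]) ^ k ∣ x := by
  rw [smul_eq_mul, Ideal.mul_top, maximalIdeal_eq_span_p, Ideal.span_singleton_pow,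
    Ideal.mem_span_singleton]

theorem eq_zero_of_forall_pow_dvd {x : ℤ_[p]} (h : ∀ k, (p : ℤ_[p]) ^ k ∣ x) : x = 0 :=
  IsHausdorff.haus' (I := maximalIdeal ℤ_[p]) x fun k => by
    rw [SModEq.zero, mem_maximalIdeal_pow_smul_top_iff]
    exact h k

theorem exists_forall_pow_dvd_sub {d : ℕ → ℤ_[p]} (hd : ∀ k, (p : ℤ_[p]) ^ k ∣ d (k + 1) - d k) :
    ∃ L, ∀ k, (p : ℤ_[p]) ^ k ∣ L - d k := by
  obtain ⟨L, hL⟩ := IsPrecomplete.prec (I := maximalIdeal ℤ_[p]) inferInstance (f := d)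
    fun {m n} hmn => by
      rw [SModEq.sub_mem, mem_maximalIdeal_pow_smul_top_iff]
      induction n, hmn using Nat.le_induction with
      | base => simp
      | succ n hmn ih =>
        rw [show d m - d (n + 1) = d m - d n - (d (n + 1) - d n) by ring]
        exact dvd_sub ih ((pow_dvd_pow _ hmn).trans (hd n))
  refine ⟨L, fun k => ?_⟩
  rw [← dvd_sub_comm, ← mem_maximalIdeal_pow_smul_top_iff, ← SModEq.sub_mem]
  exact hL k

theorem C_p_dvd_iff_map_eq_zero {f : ℤ_[p][X]} :
    C (p : ℤ_[p]) ∣ f ↔ f.map toZMod = 0 := by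
  rw [← coe_mapRingHom, ← RingHom.mem_ker, ker_mapRingHom, ker_toZMod, maximalIdeal_eq_span_p,
    Ideal.map_span, Set.image_singleton, Ideal.mem_span_singleton]

theorem C_p_pow_dvd_iff {k : ℕ} {f : ℤ_[p][X]} :
    C (p : ℤ_[p]) ^ k ∣ f ↔ ∀ i, (p : ℤ_[p]) ^ k ∣ f.coeff i := by
  rw [← map_pow, C_dvd_iff_dvd_coeff]

theorem eq_zero_of_forall_C_pow_dvd {f : ℤ_[p][X]} (h : ∀ k, C (p : ℤ_[p]) ^ k ∣ f) : f = 0 :=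
  Polynomial.ext fun i => eq_zero_of_forall_pow_dvd fun k => C_p_pow_dvd_iff.1 (h k) i

theorem exists_forall_C_pow_dvd_sub {d : ℕ} {G : ℕ → ℤ_[p][X]} (hdeg : ∀ k, (G k).degree < d)
    (hG : ∀ k, C (p : ℤ_[p]) ^ k ∣ G (k + 1) - G k) :
    ∃ L : ℤ_[p][X], L.degree < d ∧ ∀ k, C (p : ℤ_[p]) ^ k ∣ L - G k := by
  choose ℓ hℓ using fun i => exists_forall_pow_dvd_sub (d := fun k => (G k).coeff i)
    fun k => by simpa only [coeff_sub] using C_p_pow_dvd_iff.1 (hG k) i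
  set L := ∑ i ∈ Finset.range d, C (ℓ i) * X ^ i
  have hL : ∀ i, L.coeff i = if i < d then ℓ i else 0 := by
    intro i
    simp [L, coeff_C_mul, coeff_X_pow]
  refine ⟨L, ?_, fun k => C_p_pow_dvd_iff.2 fun i => ?_⟩
  · exact (degree_lt_iff_coeff_zero _ _).2 fun i hi => by rw [hL, if_neg (by omega)]
  · rw [coeff_sub, hL]
    split_ifs with hi
    · exact hℓ i k
    · rw [coeff_eq_zero_of_degree_lt ((hdeg k).trans_le (by exact_mod_cast not_lt.1 hi)), sub_zero]
      exact dvd_zero _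

theorem degree_eq_of_C_p_dvd_sub {F Q : ℤ_[p][X]} (hF : F.Monic) (hQ : Q.Monic)
    (h : C (p : ℤ_[p]) ∣ F - Q) : F.degree = Q.degree := by
  have hmap : F.map toZMod = Q.map toZMod := by
    rw [← sub_eq_zero, ← Polynomial.map_sub, ← C_p_dvd_iff_map_eq_zero]
    exact h
  rw [← hF.degree_map toZMod, ← hQ.degree_map toZMod, hmap]

theorem exists_hensel_step {F G H a b c : ℤ_[p][X]} {k : ℕ} (hF : F.Monic) (hG : G.Monic)
    (hH : H.Monic) (hdeg : F.degree = (G * H).degree)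
    (hbez : a * G + b * H = 1 + C (p : ℤ_[p]) * c) (hFGH : C (p : ℤ_[p]) ^ (k + 1) ∣ F - G * H) :
    ∃ G' H' : ℤ_[p][X], (G' - G).degree < G.degree ∧ (H' - H).degree < H.degree ∧
      C (p : ℤ_[p]) ^ (k + 1) ∣ G' - G ∧ C (p : ℤ_[p]) ^ (k + 1) ∣ H' - H ∧
      (∃ c', a * G' + b * H' = 1 + C (p : ℤ_[p]) * c') ∧
      C (p : ℤ_[p]) ^ (k + 2) ∣ F - G' * H' := by
  obtain ⟨E, hE⟩ := hFGH
  have hp : (p : ℤ_[p]) ≠ 0 := Nat.cast_ne_zero.2 (Fact.out : p.Prime).ne_zero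
  have hEdeg : E.degree < (G * H).degree := by
    rw [← degree_C_mul (pow_ne_zero (k + 1) hp), map_pow, ← hE, ← hdeg]
    exact degree_sub_lt_left hdeg hF.ne_zero (by rw [hF.leadingCoeff, (hG.mul hH).leadingCoeff])
  set r := E * b %ₘ G
  set s := E * a %ₘ H
  obtain ⟨D, hD⟩ := C_dvd_modByMonic_mul_add_modByMonic_mul_sub hG hH hbez hEdeg
  have hdeg_mul (q : ℤ_[p][X]) : (C (p : ℤ_[p]) ^ (k + 1) * q).degree = q.degree := by
    rw [← map_pow, degree_C_mul (pow_ne_zero _ hp)]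
  refine ⟨G + C (p : ℤ_[p]) ^ (k + 1) * r, H + C (p : ℤ_[p]) ^ (k + 1) * s, ?_, ?_,
    by simp, by simp, ⟨c + C (p : ℤ_[p]) ^ k * (a * r + b * s), by linear_combination hbez⟩,
    -(D + C (p : ℤ_[p]) ^ k * r * s), ?_⟩
  · rw [add_sub_cancel_left, hdeg_mul]
    exact degree_modByMonic_lt _ hG
  · rw [add_sub_cancel_left, hdeg_mul]
    exact degree_modByMonic_lt _ hH
  · linear_combination hE - C (p : ℤ_[p]) ^ (k + 1) * hD

theorem exists_hensel_seq {F G₀ H₀ a b c₀ : ℤ_[p][X]} (hF : F.Monic) (hG₀ : G₀.Monic)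
    (hH₀ : H₀.Monic) (hbez : a * G₀ + b * H₀ = 1 + C (p : ℤ_[p]) * c₀)
    (hFGH : C (p : ℤ_[p]) ∣ F - G₀ * H₀) :
    ∃ G H : ℕ → ℤ_[p][X], G 0 = G₀ ∧ H 0 = H₀ ∧
      (∀ k, (G k - G₀).degree < G₀.degree ∧ (H k - H₀).degree < H₀.degree) ∧
      (∀ k, C (p : ℤ_[p]) ^ (k + 1) ∣ F - G k * H k) ∧
      ∀ k, C (p : ℤ_[p]) ^ (k + 1) ∣ G (k + 1) - G k ∧
        C (p : ℤ_[p]) ^ (k + 1) ∣ H (k + 1) - H k := by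
  have hdegF := degree_eq_of_C_p_dvd_sub hF (hG₀.mul hH₀) hFGH
  let Approx (k : ℕ) (P : ℤ_[p][X] × ℤ_[p][X]) : Prop :=
    (P.1 - G₀).degree < G₀.degree ∧ (P.2 - H₀).degree < H₀.degree ∧
      (∃ c, a * P.1 + b * P.2 = 1 + C (p : ℤ_[p]) * c) ∧ C (p : ℤ_[p]) ^ (k + 1) ∣ F - P.1 * P.2
  -- the implication sits inside the `∃` so that `choose` yields a step function on all pairs
  have hstep : ∀ k P, ∃ P', Approx k P → Approx (k + 1) P' ∧
      C (p : ℤ_[p]) ^ (k + 1) ∣ P'.1 - P.1 ∧ C (p : ℤ_[p]) ^ (k + 1) ∣ P'.2 - P.2 := by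
    rintro k ⟨G, H⟩
    by_cases hP : Approx k (G, H)
    swap
    · exact ⟨(G, H), fun h => (hP h).elim⟩
    obtain ⟨hGdeg, hHdeg, ⟨c, hc⟩, hdvd⟩ := hP
    have hG : G.Monic := by simpa using hG₀.add_of_left hGdeg
    have hH : H.Monic := by simpa using hH₀.add_of_left hHdeg
    have hGG₀ : G.degree = G₀.degree := by simpa using degree_add_eq_left_of_degree_lt hGdeg
    have hHH₀ : H.degree = H₀.degree := by simpa using degree_add_eq_left_of_degree_lt hHdeg
    obtain ⟨G', H', hG'deg, hH'deg, hG'G, hH'H, hbez', hF'⟩ := exists_hensel_step hF hG hH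
      (by rw [hdegF, hH₀.degree_mul, hH.degree_mul, hGG₀, hHH₀]) hc hdvd
    refine ⟨(G', H'), fun _ => ⟨⟨?_, ?_, hbez', hF'⟩, hG'G, hH'H⟩⟩
    · rw [← sub_add_sub_cancel G' G G₀]
      exact (degree_add_le _ _).trans_lt (max_lt (hGG₀ ▸ hG'deg) hGdeg)
    · rw [← sub_add_sub_cancel H' H H₀]
      exact (degree_add_le _ _).trans_lt (max_lt (hHH₀ ▸ hH'deg) hHdeg)
  choose next hnext using hstep
  let P (k : ℕ) : ℤ_[p][X] × ℤ_[p][X] := Nat.rec (G₀, H₀) next k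
  have hP (k : ℕ) : Approx k (P k) := by
    induction k with
    | zero => exact show Approx 0 (G₀, H₀) from ⟨by simpa [bot_lt_iff_ne_bot] using hG₀.ne_zero,
        by simpa [bot_lt_iff_ne_bot] using hH₀.ne_zero, ⟨c₀, hbez⟩, by simpa using hFGH⟩
    | succ k ih => exact (hnext k (P k) ih).1
  exact ⟨fun k => (P k).1, fun k => (P k).2, rfl, rfl, fun k => ⟨(hP k).1, (hP k).2.1⟩,
    fun k => (hP k).2.2.2, fun k => (hnext k (P k) (hP k)).2⟩

theorem exists_monic_factor_lift {F G₀ H₀ : ℤ_[p][X]} (hF : F.Monic) (hG₀ : G₀.Monic)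
    (hH₀ : H₀.Monic) (hcop : IsCoprime (G₀.map toZMod) (H₀.map toZMod))
    (hFGH : C (p : ℤ_[p]) ∣ F - G₀ * H₀) :
    ∃ g h : ℤ_[p][X], g.Monic ∧ F = g * h ∧ C (p : ℤ_[p]) ∣ g - G₀ := by
  obtain ⟨a, b, hab⟩ := exists_mul_add_mul_sub_one_mem_ker (ZMod.ringHom_surjective toZMod) hcop
  obtain ⟨c, hc⟩ := C_p_dvd_iff_map_eq_zero.2 hab
  obtain ⟨G, H, hG0, -, hdeg, hFGH, hcauchy⟩ :=
    exists_hensel_seq hF hG₀ hH₀ (a := a) (b := b) (c₀ := c) (by linear_combination hc) hFGH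
  rw [degree_eq_natDegree hG₀.ne_zero, degree_eq_natDegree hH₀.ne_zero] at hdeg
  obtain ⟨LG, hLGdeg, hLG⟩ := exists_forall_C_pow_dvd_sub (G := fun k => G k - G₀)
    (fun k => (hdeg k).1) fun k => by
      rw [sub_sub_sub_cancel_right]; exact (pow_dvd_pow _ k.le_succ).trans (hcauchy k).1
  obtain ⟨LH, -, hLH⟩ := exists_forall_C_pow_dvd_sub (G := fun k => H k - H₀)
    (fun k => (hdeg k).2) fun k => by
      rw [sub_sub_sub_cancel_right]; exact (pow_dvd_pow _ k.le_succ).trans (hcauchy k).2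
  have hg (k : ℕ) : C (p : ℤ_[p]) ^ k ∣ G₀ + LG - G k := by convert hLG k using 1; ring
  have hh (k : ℕ) : C (p : ℤ_[p]) ^ k ∣ H₀ + LH - H k := by convert hLH k using 1; ring
  refine ⟨G₀ + LG, H₀ + LH, hG₀.add_of_left (by rwa [degree_eq_natDegree hG₀.ne_zero]),
    sub_eq_zero.1 (eq_zero_of_forall_C_pow_dvd fun k => ?_), ?_⟩
  · rw [show F - (G₀ + LG) * (H₀ + LH) = (F - G k * H k) - (G₀ + LG - G k) * H k
        - (G₀ + LG) * (H₀ + LH - H k) by ring]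
    exact dvd_sub (dvd_sub ((pow_dvd_pow _ k.le_succ).trans (hFGH k))
      (dvd_mul_of_dvd_left (hg k) _)) (dvd_mul_of_dvd_right (hh k) _)
  · simpa [hG0] using dvd_add (hg 1) (hcauchy 0).1

theorem exists_monic_dvd_map_eq {F : ℤ_[p][X]} (hF : F.Monic) (hsep : (F.map toZMod).Separable)
    {g' : (ZMod p)[X]} (hg' : g'.Monic) (hdvd : g' ∣ F.map toZMod) :
    ∃ g : ℤ_[p][X], g.Monic ∧ g ∣ F ∧ g.map toZMod = g' := by
  obtain ⟨h', hF'⟩ := hdvd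
  have hh' : h'.Monic := hg'.of_mul_monic_left (hF' ▸ hF.map toZMod)
  have hlifts (q : (ZMod p)[X]) : q ∈ lifts toZMod :=
    (lifts_iff_set_range _).2 (map_surjective _ (ZMod.ringHom_surjective toZMod) q)
  obtain ⟨G₀, hG₀map, -, hG₀⟩ := lifts_and_natDegree_eq_and_monic (hlifts g') hg'
  obtain ⟨H₀, hH₀map, -, hH₀⟩ := lifts_and_natDegree_eq_and_monic (hlifts h') hh'
  obtain ⟨g, h, hg, rfl, hgG₀⟩ := exists_monic_factor_lift hF hG₀ hH₀
    (by rw [hG₀map, hH₀map]; exact Separable.isCoprime (hF' ▸ hsep))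
    (by rw [C_p_dvd_iff_map_eq_zero, Polynomial.map_sub, Polynomial.map_mul, hG₀map, hH₀map, hF',
      sub_self])
  refine ⟨g, hg, dvd_mul_right g h, ?_⟩
  rw [← hG₀map, ← sub_eq_zero, ← Polynomial.map_sub, ← C_p_dvd_iff_map_eq_zero]
  exact hgG₀

theorem le_span_singleton_of_saturated {K : Ideal ℤ_[p][X]}
    (hsat : ∀ r, C (p : ℤ_[p]) * r ∈ K → r ∈ K) {g : ℤ_[p][X]} (hg : g.Monic) (hgK : g ∈ K)
    (hdvd : ∀ r ∈ K, g.map toZMod ∣ r.map toZMod) :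
    K ≤ Ideal.span {g} := by
  have hp : (p : ℤ_[p]) ≠ 0 := Nat.cast_ne_zero.2 (Fact.out : p.Prime).ne_zero
  have key (k : ℕ) : ∀ s ∈ K, s.degree < g.degree → C (p : ℤ_[p]) ^ k ∣ s := by
    induction k with
    | zero => simp
    | succ k ih =>
      intro s hs hsdeg
      obtain ⟨s', rfl⟩ := C_p_dvd_iff_map_eq_zero.2 <| eq_zero_of_dvd_of_degree_lt (hdvd s hs)
        (degree_map_le.trans_lt (by rwa [hg.degree_map]))
      rw [pow_succ']
      exact mul_dvd_mul_left _ (ih s' (hsat s' hs) (by rwa [degree_C_mul hp] at hsdeg))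
  intro r hr
  rw [Ideal.mem_span_singleton, ← modByMonic_eq_zero_iff_dvd hg]
  refine eq_zero_of_forall_C_pow_dvd fun k => key k _ ?_ (degree_modByMonic_lt _ hg)
  rw [modByMonic_eq_sub_mul_div]
  exact K.sub_mem hr (K.mul_mem_right _ hgK)

noncomputable def colonPow (J : Ideal ℤ_[p][X]) (m : ℕ) : Ideal ℤ_[p][X] :=
  J.colon {C (p : ℤ_[p]) ^ m}

theorem mem_colonPow {J : Ideal ℤ_[p][X]} {m : ℕ} {r : ℤ_[p][X]} :
    r ∈ colonPow J m ↔ C (p : ℤ_[p]) ^ m * r ∈ J := by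
  rw [colonPow, Submodule.mem_colon_singleton, smul_eq_mul, mul_comm]

theorem colonPow_mono (J : Ideal ℤ_[p][X]) : Monotone (colonPow J) := by
  intro m m' hmm' r hr
  rw [mem_colonPow, ← Nat.sub_add_cancel hmm', pow_add, mul_assoc]
  exact J.mul_mem_left _ (mem_colonPow.1 hr)

theorem mul_mem_span_of_mem_colonPow {J : Ideal ℤ_[p][X]} {g : ℕ → ℤ_[p][X]} {M : ℕ}
    (hgJ : ∀ m, g m ∈ colonPow J m)
    (hdvd : ∀ m, ∀ r ∈ colonPow J m, (g m).map toZMod ∣ r.map toZMod)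
    (hM : colonPow J M ≤ Ideal.span {g M}) {m : ℕ} (hm : m ≤ M) :
    ∀ r ∈ colonPow J m, C (p : ℤ_[p]) ^ m * r ∈
      Ideal.span (Set.range fun i : Fin (M + 1) => C (p : ℤ_[p]) ^ (i : ℕ) * g i) := by
  have hgT (i : ℕ) (hi : i ≤ M) : C (p : ℤ_[p]) ^ i * g i ∈
      Ideal.span (Set.range fun i : Fin (M + 1) => C (p : ℤ_[p]) ^ (i : ℕ) * g i) :=
    Ideal.subset_span ⟨⟨i, Nat.lt_succ_of_le hi⟩, rfl⟩
  induction hm using Nat.decreasingInduction with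
  | self =>
    intro r hr
    obtain ⟨q, rfl⟩ := Ideal.mem_span_singleton.1 (hM hr)
    rw [← mul_assoc]
    exact Ideal.mul_mem_right _ _ (hgT M le_rfl)
  | of_succ m hm ih =>
    intro r hr
    obtain ⟨c', hc'⟩ := hdvd m r hr
    obtain ⟨c, rfl⟩ := map_surjective _ (ZMod.ringHom_surjective toZMod) c'
    obtain ⟨r', hr'⟩ : C (p : ℤ_[p]) ∣ r - g m * c := by
      rw [C_p_dvd_iff_map_eq_zero, Polynomial.map_sub, Polynomial.map_mul, hc', sub_self]
    have hr'J : r' ∈ colonPow J (m + 1) := by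
      rw [mem_colonPow, pow_succ, mul_assoc, ← hr']
      exact mem_colonPow.1 (Ideal.sub_mem _ hr (Ideal.mul_mem_right _ _ (hgJ m)))
    rw [show r = g m * c + C (p : ℤ_[p]) * r' by rw [← hr']; ring, mul_add, ← mul_assoc,
      ← mul_assoc, ← pow_succ]
    exact Ideal.add_mem _ (Ideal.mul_mem_right _ _ (hgT m (Nat.le_of_succ_le hm))) (ih r' hr'J)

theorem exists_eq_span_of_mem {F : ℤ_[p][X]} (hF : F.Monic) (hsep : (F.map toZMod).Separable)
    {J : Ideal ℤ_[p][X]} (hFJ : F ∈ J) :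
    ∃ (M : ℕ) (g : ℕ → ℤ_[p][X]), (∀ i, (g i).Monic) ∧ (∀ i, g i ∣ F) ∧
      (∀ i j, i ≤ j → g j ∣ g i) ∧
      J = Ideal.span (Set.range fun i : Fin (M + 1) => C (p : ℤ_[p]) ^ (i : ℕ) * g i) := by
  have hsurj := ZMod.ringHom_surjective (toZMod (p := p))
  have hFK (m : ℕ) : F ∈ colonPow J m := mem_colonPow.2 (J.mul_mem_left _ hFJ)
  obtain ⟨M, hM⟩ : ∃ M, ∀ m, M ≤ m → colonPow J M = colonPow J m :=
    monotone_stabilizes_iff_noetherian.2 inferInstance ⟨_, colonPow_mono J⟩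
  choose g' hg'monic hg'span using fun m => exists_monic_span_eq (J :=
    (colonPow J m).map (mapRingHom toZMod)) <| (Submodule.ne_bot_iff _).2
      ⟨_, Ideal.mem_map_of_mem _ (hFK m), (hF.map toZMod).ne_zero⟩
  have hdvd (m : ℕ) (r : ℤ_[p][X]) (hr : r ∈ colonPow J m) : g' m ∣ r.map toZMod := by
    rw [← Ideal.mem_span_singleton, ← hg'span]
    exact Ideal.mem_map_of_mem (mapRingHom toZMod) hr
  choose g hgmonic hgF hgmap using fun m =>
    exists_monic_dvd_map_eq hF hsep (hg'monic m) (hdvd m F (hFK m))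
  have hgK (m : ℕ) : g m ∈ colonPow J m := mem_of_dvd_of_map_mem_map hsurj hF hsep (hFK m)
    (hgF m) (by rw [hgmap, hg'span]; exact Ideal.mem_span_singleton_self _)
  simp only [← hgmap] at hdvd
  have hMsat : colonPow J M ≤ Ideal.span {g M} := by
    refine le_span_singleton_of_saturated (fun r hr => ?_) (hgmonic M) (hgK M) (hdvd M)
    rw [hM (M + 1) M.le_succ, mem_colonPow, pow_succ, mul_assoc]
    exact mem_colonPow.1 hr
  refine ⟨M, g, hgmonic, hgF, fun i j hij => dvd_of_map_dvd_map hsurj hF hsep (hgF j) (hgF i)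
    (hdvd j _ (colonPow_mono J hij (hgK i))), le_antisymm (fun r hr => ?_) ?_⟩
  · simpa using mul_mem_span_of_mem_colonPow hgK hdvd hMsat (Nat.zero_le M) r
      (by rwa [mem_colonPow, pow_zero, one_mul])
  · rw [Ideal.span_le]
    rintro _ ⟨i, rfl⟩
    exact mem_colonPow.1 (hgK i)

end PadicInt

open PadicInt in
theorem stmt10 (p : ℕ) [Fact p.Prime] (n : ℕ) (hn : 0 < n) (hpn : ¬ p ∣ n)
    (I : Ideal (RquotP p n)) :
    ∃ (b : ℕ) (m : Fin b → ℕ) (f : Fin b → Polynomial ℤ_[p]),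
      StrictMono m ∧
      (∀ i, (f i).Monic) ∧
      (∀ i, f i ∣ (X ^ n - 1)) ∧
      (∀ i j : Fin b, i ≤ j → f j ∣ f i) ∧
      I = Ideal.span (Set.range fun i : Fin b =>
        pmk p n (C ((p : ℤ_[p]) ^ m i) * f i)) := by
  have hF : ((X : ℤ_[p][X]) ^ n - 1).Monic := by simpa using monic_X_pow_sub_C (1 : ℤ_[p]) hn.ne'
  have hsep : (((X : ℤ_[p][X]) ^ n - 1).map toZMod).Separable := by
    simpa using separable_X_pow_sub_C (1 : ZMod p)
      (mt (ZMod.natCast_eq_zero_iff n p).1 hpn) one_ne_zero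
  have hFI : (X : ℤ_[p][X]) ^ n - 1 ∈ I.comap (pmk p n) := by simp
  obtain ⟨M, g, hmonic, hdvd, hchain, hspan⟩ := exists_eq_span_of_mem hF hsep hFI
  refine ⟨M + 1, (↑), fun i => g i, Fin.val_strictMono, fun i => hmonic i, fun i => hdvd i,
    fun i j hij => hchain i j hij, ?_⟩
  rw [← Ideal.map_comap_of_surjective _ Ideal.Quotient.mk_surjective I, hspan, Ideal.map_span,
    ← Set.range_comp]
  simp [Function.comp_def]
end

section
/- Every ideal of R_∞ is principal; that is, R_∞ = ℤ_p[X]/(X^n − 1) is a principal ideal ring. -/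
/-!
By Kaplansky's criterion it suffices that every prime `P` of `R = A[X]/(f)` is principal, where
`A` is a complete discrete valuation ring with maximal ideal `m = (ϖ)` and `f` is monic with
squarefree reduction (for `A = ℤ_p`, `f = X^n - 1` this is where `p ∤ n` enters).
If `P ∩ A = 0`, then `P` is generated by a monic prime factor `g` of `f`: the image of `P` in the
domain `A[X]/(g)`, integral over `A`, meets `A` trivially and is therefore zero.
If `P ∩ A = m`, then `mR ⊆ P`. Since `R/mR = k[X]/(f̄)` is a product of fields, `P/mR` is generated
by an idempotent, and as `R` is `m`-adically complete (a finite `A`-module), hence Henselian,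
that idempotent lifts to an idempotent `e` of `R`. Then `P = (e, ϖ) = (e + ϖ(1 - e))`.
-/

open Polynomial IsLocalRing

universe u

theorem IsAdicComplete.of_finite {R M : Type u} [CommRing R] [IsNoetherianRing R] (I : Ideal R)
    [IsAdicComplete I R] [AddCommGroup M] [Module R M] [Module.Finite R M] :
    IsAdicComplete I M := by
  rw [← AdicCompletion.of_bijective_iff]
  -- `M ≃ R ⊗ M ≃ R̂ ⊗ M ≃ M̂`, the last map being bijective for finite modules over Noetherian rings.
  have key : ⇑(AdicCompletion.of I M) = AdicCompletion.ofTensorProduct I M ∘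
      TensorProduct.congr (AdicCompletion.ofLinearEquiv I R) (LinearEquiv.refl R M) ∘
      (TensorProduct.lid R M).symm := by
    ext x : 1
    exact (one_smul (AdicCompletion I R) _).symm
  rw [key]
  exact (AdicCompletion.ofTensorProduct_bijective_of_finite_of_isNoetherian I M).comp
    (LinearEquiv.bijective _ |>.comp (LinearEquiv.bijective _))

theorem HenselianRing.exists_isIdempotentElem_sub_mem {R : Type*} [CommRing R] {I : Ideal R}
    [HenselianRing R I] {a : R} (ha : a * a - a ∈ I) : ∃ e, IsIdempotentElem e ∧ e - a ∈ I := by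
  have hmonic : ((X : R[X]) ^ 2 - X).Monic := monic_X_pow_sub (degree_X_le.trans_lt (by decide))
  -- `(2a - 1)² = 1 + 4(a² - a)`, so the derivative of `X² - X` at `a` is a unit modulo `I`.
  have hunit : IsUnit (Ideal.Quotient.mk I ((derivative ((X : R[X]) ^ 2 - X)).eval a)) := by
    refine .of_mul_eq_one (Ideal.Quotient.mk I (2 * a - 1)) ?_
    rw [← map_mul, ← map_one (Ideal.Quotient.mk I), Ideal.Quotient.eq]
    convert I.mul_mem_left 4 ha using 1
    simp only [derivative_sub, derivative_X_pow_succ, Nat.cast_one, map_add, map_one, pow_one,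
      derivative_X, eval_sub, eval_mul, eval_add, eval_one, eval_X]
    ring
  obtain ⟨e, he, hea⟩ := HenselianRing.is_henselian _ hmonic a (by simpa [sq] using ha) hunit
  refine ⟨e, ?_, hea⟩
  simpa [IsIdempotentElem, sq, sub_eq_zero] using he

theorem IsIdempotentElem.span_pair_eq_span_singleton {R : Type*} [CommRing R] {e : R}
    (he : IsIdempotentElem e) (t : R) : Ideal.span {e, t} = Ideal.span {e + t * (1 - e)} := by
  refine le_antisymm ?_ ?_
  · rw [Ideal.span_le, Set.insert_subset_iff, Set.singleton_subset_iff]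
    constructor
    · exact Ideal.mem_span_singleton'.mpr ⟨e, by linear_combination (1 - t) * he.eq⟩
    · exact Ideal.mem_span_singleton'.mpr
        ⟨t * e + 1 - e, by linear_combination (2 * t - t * t - 1) * he.eq⟩
  · rw [Ideal.span_singleton_le_iff_mem, Ideal.mem_span_pair]
    exact ⟨1, 1 - e, by ring⟩

theorem Polynomial.isSemisimpleRing_quotient_span_of_squarefree {K : Type*} [Field K] {f : K[X]}
    (hf : Squarefree f) : IsSemisimpleRing (K[X] ⧸ Ideal.span {f}) :=
  have : IsReduced (K[X] ⧸ Ideal.span {f}) :=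
    (Ideal.isRadical_iff_quotient_reduced _).mp (isRadical_iff_span_singleton.mp hf.isRadical)
  have : FiniteDimensional K (K[X] ⧸ Ideal.span {f}) := (AdjoinRoot.powerBasis hf.ne_zero).finite
  have : IsArtinianRing (K[X] ⧸ Ideal.span {f}) := .of_finite K _
  IsArtinianRing.isSemisimpleRing_of_isReduced _

theorem Ideal.IsPrime.exists_monic_prime_mem {A : Type*} [CommRing A] [IsDomain A]
    [UniqueFactorizationMonoid A] {Q : Ideal A[X]} (hQ : Q.IsPrime) {f : A[X]} (hf : f.Monic)
    (hfQ : f ∈ Q) : ∃ g : A[X], g.Monic ∧ Prime g ∧ g ∈ Q := by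
  classical
  have hprod : (UniqueFactorizationMonoid.factors f).prod ∈ Q := by
    obtain ⟨u, hu⟩ := UniqueFactorizationMonoid.factors_prod hf.ne_zero
    rw [← Units.eq_mul_inv_iff_mul_eq] at hu
    exact hu ▸ Q.mul_mem_right _ hfQ
  obtain ⟨g, hg, hgQ⟩ := (hQ.multiset_prod_mem_iff_exists_mem _).mp hprod
  have hu : IsUnit g.leadingCoeff :=
    hf.isUnit_leadingCoeff_of_dvd (UniqueFactorizationMonoid.dvd_of_mem_factors hg)
  refine ⟨C ↑hu.unit⁻¹ * g, ?_, ?_, Q.mul_mem_left _ hgQ⟩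
  · exact monic_C_mul_of_mul_leadingCoeff_eq_one hu.val_inv_mul
  · exact (associated_unit_mul_left g _ (isUnit_C.mpr (Units.isUnit _))).symm.prime
      (UniqueFactorizationMonoid.prime_of_factor g hg)

theorem Ideal.eq_span_of_monic_of_comap_C_eq_bot {A : Type*} [CommRing A] [IsDomain A]
    {g : A[X]} (hg : g.Monic) (hgp : Prime g) {Q : Ideal A[X]} (hgQ : g ∈ Q)
    (hQ : Q.comap C = ⊥) : Q = Ideal.span {g} := by
  have hspan : Ideal.span {g} ≤ Q := (Ideal.span_singleton_le_iff_mem _).mpr hgQ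
  refine le_antisymm ?_ hspan
  have : (Ideal.span {g}).IsPrime := (Ideal.span_singleton_prime hgp.ne_zero).mpr hgp
  have : Module.Finite A (A[X] ⧸ Ideal.span {g}) := (AdjoinRoot.powerBasis' hg).finite
  have hbot : Q.map (Ideal.Quotient.mk (Ideal.span {g})) = ⊥ := by
    refine Ideal.eq_bot_of_comap_eq_bot (R := A) ?_
    rw [IsScalarTower.algebraMap_eq A A[X], Ideal.Quotient.algebraMap_eq, algebraMap_eq,
      ← Ideal.comap_comap, Ideal.comap_map_mk hspan, hQ]
  rwa [Ideal.map_eq_bot_iff_le_ker, Ideal.mk_ker] at hbot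

theorem Ideal.isPrincipal_of_le_of_henselianRing {R : Type*} [CommRing R] {I : Ideal R}
    [HenselianRing R I] [IsSemisimpleRing (R ⧸ I)] (hI : I.IsPrincipal) {P : Ideal R}
    (hIP : I ≤ P) : P.IsPrincipal := by
  obtain ⟨e₀, he₀, hPe₀⟩ :=
    IsSemisimpleRing.ideal_eq_span_idempotent (P.map (Ideal.Quotient.mk I))
  obtain ⟨a, rfl⟩ := Ideal.Quotient.mk_surjective e₀
  obtain ⟨e, he, hea⟩ := HenselianRing.exists_isIdempotentElem_sub_mem (I := I) (a := a)
    (Ideal.Quotient.eq.mp (by rw [map_mul, he₀.eq]))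
  obtain ⟨t, rfl⟩ := hI
  refine ⟨e + t * (1 - e), ?_⟩
  rw [Ideal.submodule_span_eq, ← he.span_pair_eq_span_singleton, Ideal.span_insert,
    ← Ideal.comap_map_mk hIP, hPe₀, ← Ideal.Quotient.eq.mpr hea, ← Set.image_singleton,
    ← Ideal.map_span, Ideal.comap_map_of_surjective' _ Ideal.Quotient.mk_surjective, Ideal.mk_ker]

theorem Polynomial.isPrincipalIdealRing_quotient_span_of_squarefree_map {A : Type u} [CommRing A]
    [IsDomain A] [IsDiscreteValuationRing A] [IsAdicComplete (maximalIdeal A) A] {f : A[X]}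
    (hf : f.Monic) (hsq : Squarefree (f.map (residue A))) :
    IsPrincipalIdealRing (A[X] ⧸ Ideal.span {f}) := by
  set R := A[X] ⧸ Ideal.span {f}
  have : Module.Finite A R := (AdjoinRoot.powerBasis' hf).finite
  have : IsAdicComplete ((maximalIdeal A).map (algebraMap A R)) R :=
    (IsAdicComplete.map_algebraMap_iff _ _).mpr (.of_finite _)
  have : IsSemisimpleRing (R ⧸ (maximalIdeal A).map (algebraMap A R)) :=
    have : IsSemisimpleRing ((A ⧸ maximalIdeal A)[X] ⧸ Ideal.span {f.map (Ideal.Quotient.mk _)}) :=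
      isSemisimpleRing_quotient_span_of_squarefree hsq
    (AdjoinRoot.quotEquivQuotMap f (maximalIdeal A)).symm.toRingEquiv.isSemisimpleRing
  refine .of_prime fun P hP ↦ ?_
  rcases eq_or_ne (P.comap (algebraMap A R)) ⊥ with hbot | hne
  · have hfQ : f ∈ P.comap (Ideal.Quotient.mk _) := by simp
    obtain ⟨g, hg, hgp, hgQ⟩ := (Ideal.IsPrime.comap _).exists_monic_prime_mem hf hfQ
    refine ⟨Ideal.Quotient.mk _ g, ?_⟩
    rw [Ideal.submodule_span_eq, ← Set.image_singleton, ← Ideal.map_span,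
      ← Ideal.eq_span_of_monic_of_comap_C_eq_bot hg hgp hgQ hbot,
      Ideal.map_comap_of_surjective _ Ideal.Quotient.mk_surjective]
  · have hmax := eq_maximalIdeal ((Ideal.IsPrime.comap _).isMaximal hne)
    refine Ideal.isPrincipal_of_le_of_henselianRing ?_ (Ideal.map_le_iff_le_comap.mpr hmax.ge)
    obtain ⟨ϖ, hϖ⟩ := IsPrincipalIdealRing.principal (maximalIdeal A)
    refine ⟨algebraMap A R ϖ, ?_⟩
    rw [hϖ, Ideal.submodule_span_eq, Ideal.map_span, Set.image_singleton]

theorem stmt12_general (p : ℕ) [Fact p.Prime] (n : ℕ) (hpn : ¬ p ∣ n) :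
    IsPrincipalIdealRing
      (Polynomial ℤ_[p] ⧸ Ideal.span {(X : Polynomial ℤ_[p]) ^ n - 1}) := by
  have hn : n ≠ 0 := by rintro rfl; exact hpn (dvd_zero p)
  refine isPrincipalIdealRing_quotient_span_of_squarefree_map (monic_X_pow_sub_C 1 hn) ?_
  have hn' : (n : ResidueField ℤ_[p]) ≠ 0 := by
    rw [← map_natCast (residue ℤ_[p]), Ne, residue_eq_zero_iff, ← PadicInt.ker_toZMod,
      RingHom.mem_ker, map_natCast, ZMod.natCast_eq_zero_iff]
    exact hpn
  simpa using (separable_X_pow_sub_C 1 hn' one_ne_zero).squarefree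

theorem stmt12 (p : ℕ) [Fact p.Prime] (n : ℕ) (hn : 0 < n) (hpn : ¬ p ∣ n) :
    IsPrincipalIdealRing
      (Polynomial ℤ_[p] ⧸ Ideal.span {(X : Polynomial ℤ_[p]) ^ n - 1}) :=
  stmt12_general p n hpn
end
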